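/- Let C be a negacyclic conference matrix of order v ≡ 2 (mod 4) with first row c = (0, c_1, ..., c_{v-1}). Then the split sequences a = (0, c_2, c_4, ..., c_{v-2}) and b = (c_1, c_3, ..., c_{v-1}) of length v/2 satisfy NAF_a(k) + NAF_b(k) = NAF_c(2k) = 0 for all 0 < k < v/2; i.e., a and b are N-complementary. -/

import Mathlib

/-- Ordinary autocorrelation. -/
def AF (v : ℕ) (a : ℕ → ℤ) (k : ℕ) : ℤ :=
  ∑ i ∈ Finset.range (v - k), a i * a (i + k)

/-- Negaperiodic autocorrelation `NAF_a(k) = AF_a(k) - AF_a(v-k)`. -/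
def NAF (v : ℕ) (a : ℕ → ℤ) (k : ℕ) : ℤ :=
  AF v a k - AF v a (v - k)

/-- The negacyclic shift matrix `N` of order `v`. -/
def negaShift (v : ℕ) : Matrix (Fin v) (Fin v) ℤ :=
  Matrix.of fun i j => if (i : ℕ) + 1 = (j : ℕ) then 1
    else if (i : ℕ) = v - 1 ∧ (j : ℕ) = 0 then -1 else 0

/-- The negacyclic matrix of order `v` with first row `c`. -/
def negacyclic (v : ℕ) (c : ℕ → ℤ) : Matrix (Fin v) (Fin v) ℤ :=
  ∑ i ∈ Finset.range v, c i • (negaShift v) ^ i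

open Finset

/-!
Entry `(0, s)` of `C Cᵀ` pairs the first row of `C` with its negacyclic shift by `s`, which is
`NAF_c(s)`; the conference condition makes it vanish for `0 < s < v`. Splitting the sum defining
`AF_c(2k)` by the parity of the index gives `AF_a(k) + AF_b(k)`, and the same at
`v - 2k = 2 (v/2 - k)` because `v` is even.
-/

theorem Finset.sum_range_two_mul {M : Type*} [AddCommMonoid M] (n : ℕ) (f : ℕ → M) :
    ∑ i ∈ range (2 * n), f i = ∑ i ∈ range n, f (2 * i) + ∑ i ∈ range n, f (2 * i + 1) := by
  induction n with
  | zero => simp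
  | succ n ih =>
    rw [show 2 * (n + 1) = 2 * n + 1 + 1 by ring, sum_range_succ, sum_range_succ, ih,
      sum_range_succ, sum_range_succ]
    abel

theorem AF_even_add_AF_odd (m : ℕ) (c : ℕ → ℤ) (k : ℕ) :
    AF m (fun i => c (2 * i)) k + AF m (fun i => c (2 * i + 1)) k = AF (2 * m) c (2 * k) := by
  rw [AF, AF, AF, show 2 * m - 2 * k = 2 * (m - k) by omega, sum_range_two_mul]
  simp only [mul_add, add_right_comm]

theorem NAF_even_add_NAF_odd (m : ℕ) (c : ℕ → ℤ) (k : ℕ) :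
    NAF m (fun i => c (2 * i)) k + NAF m (fun i => c (2 * i + 1)) k = NAF (2 * m) c (2 * k) := by
  rw [NAF, NAF, NAF, show 2 * m - 2 * k = 2 * (m - k) by omega, ← AF_even_add_AF_odd,
    ← AF_even_add_AF_odd]
  ring

theorem negaShift_mul_apply {v : ℕ} (M : Matrix (Fin v) (Fin v) ℤ) (k j : Fin v) :
    (negaShift v * M) k j = if h : (k : ℕ) + 1 < v then M ⟨k + 1, h⟩ j else -M ⟨0, k.pos⟩ j := by
  have hk := k.isLt
  rw [Matrix.mul_apply]
  split_ifs with h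
  · rw [Fintype.sum_eq_single ⟨k + 1, h⟩ fun m hm => ?_]
    · rw [negaShift, Matrix.of_apply, if_pos rfl, one_mul]
    · have hm' : (m : ℕ) ≠ k + 1 := Fin.val_ne_of_ne hm
      rw [negaShift, Matrix.of_apply, if_neg (by omega), if_neg (by omega), zero_mul]
  · rw [Fintype.sum_eq_single ⟨0, k.pos⟩ fun m hm => ?_]
    · rw [negaShift, Matrix.of_apply, if_neg (by simp), if_pos (by simp; omega), neg_one_mul]
    · have hm' : (m : ℕ) ≠ 0 := Fin.val_ne_of_ne hm
      rw [negaShift, Matrix.of_apply, if_neg (by omega), if_neg (by omega), zero_mul]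

theorem negaShift_pow_apply {v i : ℕ} (hi : i < v) (k j : Fin v) :
    (negaShift v ^ i) k j =
      if (k : ℕ) + i = j then 1 else if (k : ℕ) + i = j + v then -1 else 0 := by
  induction i generalizing k with
  | zero =>
    have := k.isLt
    simp only [pow_zero, Matrix.one_apply, Fin.ext_iff, add_zero]
    split_ifs <;> omega
  | succ i ih =>
    rw [pow_succ', negaShift_mul_apply]
    split_ifs <;> simp_all [ih (by omega)] <;> omega

theorem negacyclic_apply (v : ℕ) (c : ℕ → ℤ) (k j : Fin v) :
    negacyclic v c k j = if (k : ℕ) ≤ j then c ((j : ℕ) - k) else -c (v + j - k) := by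
  have hk := k.isLt
  have hj := j.isLt
  rw [negacyclic, Matrix.sum_apply]
  simp only [Matrix.smul_apply]
  split_ifs with h
  · rw [sum_eq_single ((j : ℕ) - k)]
    · rw [negaShift_pow_apply (by omega), if_pos (by omega), smul_eq_mul, mul_one]
    · intro i hi hne
      have hiv := mem_range.mp hi
      rw [negaShift_pow_apply hiv, if_neg (by omega), if_neg (by omega), smul_zero]
    · exact fun hj => absurd (mem_range.mpr (by omega)) hj
  · rw [sum_eq_single (v + (j : ℕ) - k)]
    · rw [negaShift_pow_apply (by omega), if_neg (by omega), if_pos (by omega), smul_eq_mul,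
        mul_neg_one]
    · intro i hi hne
      have hiv := mem_range.mp hi
      rw [negaShift_pow_apply hiv, if_neg (by omega), if_neg (by omega), smul_zero]
    · exact fun hj => absurd (mem_range.mpr (by omega)) hj

theorem negacyclic_mul_transpose_zero_apply {v s : ℕ} (hv : 0 < v) (hs : s < v) (c : ℕ → ℤ) :
    (negacyclic v c * (negacyclic v c).transpose) ⟨0, hv⟩ ⟨s, hs⟩ = NAF v c s := by
  simp only [Matrix.mul_apply, Matrix.transpose_apply, negacyclic_apply, Nat.zero_le, if_true,
    Nat.sub_zero]
  rw [Fin.sum_univ_eq_sum_range (fun n => c n * if s ≤ n then c (n - s) else -c (v + n - s))]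
  obtain ⟨t, rfl⟩ : ∃ t, v = s + t := ⟨v - s, by omega⟩
  rw [sum_range_add, NAF, AF, AF, Nat.add_sub_cancel_left, Nat.add_sub_cancel,
    sub_eq_neg_add, ← sum_neg_distrib]
  congr 1
  · refine sum_congr rfl fun i hi => ?_
    rw [if_neg (by simp at hi; omega), show s + t + i - s = i + t by omega, mul_neg]
  · refine sum_congr rfl fun i _ => ?_
    rw [if_pos (by omega), Nat.add_sub_cancel_left, add_comm s i, mul_comm]

theorem split_negacyclic_conference_N_complementary_general (v : ℕ) (hv : v % 4 = 2) (c : ℕ → ℤ)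
    (hconf : (negacyclic v c) * (negacyclic v c).transpose =
      ((v : ℤ) - 1) • (1 : Matrix (Fin v) (Fin v) ℤ)) :
    ∀ k, 0 < k → k < v / 2 →
      NAF (v / 2) (fun i => c (2 * i)) k + NAF (v / 2) (fun i => c (2 * i + 1)) k =
        NAF v c (2 * k) ∧
      NAF v c (2 * k) = 0 := by
  intro k hk hkv
  have hv0 : 0 < v := by omega
  have h2k : 2 * k < v := by omega
  refine ⟨?_, ?_⟩
  · rw [NAF_even_add_NAF_odd, Nat.two_mul_div_two_of_even (Nat.even_iff.mpr (by omega))]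
  · have off_diag := congr_fun₂ hconf ⟨0, hv0⟩ ⟨2 * k, h2k⟩
    rwa [negacyclic_mul_transpose_zero_apply, Matrix.smul_apply, Matrix.one_apply_ne
      (by simp [Fin.ext_iff]; omega), smul_zero] at off_diag

/-- splitting the first row of a negacyclic conference matrix of order
`v ≡ 2 (mod 4)` into even and odd indexed subsequences `a = (0, c_2, ..., c_{v-2})` and
`b = (c_1, c_3, ..., c_{v-1})` gives `NAF_a(k) + NAF_b(k) = NAF_c(2k) = 0` for
`0 < k < v/2`; i.e. `a` and `b` are N-complementary. -/
theorem split_negacyclic_conference_N_complementary (v : ℕ) (hv : v % 4 = 2) (c : ℕ → ℤ)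
    (hc0 : c 0 = 0)
    (hcent : ∀ i, 0 < i → i < v → c i = 1 ∨ c i = -1)
    (hconf : (negacyclic v c) * (negacyclic v c).transpose =
      ((v : ℤ) - 1) • (1 : Matrix (Fin v) (Fin v) ℤ)) :
    ∀ k, 0 < k → k < v / 2 →
      NAF (v / 2) (fun i => c (2 * i)) k + NAF (v / 2) (fun i => c (2 * i + 1)) k =
        NAF v c (2 * k) ∧
      NAF v c (2 * k) = 0 :=
  split_negacyclic_conference_N_complementary_general v hv c hconf
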